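/- arXiv:1308.1897 — 7 statements merged into one kernel-verified Lean document; each statement's English description precedes it below -/
import Mathlib

section
/- Let A be a unital Banach algebra and let a be an element of A. If x and y both satisfy a = axa, x = xax, ax and xa hermitian (resp. a = aya, y = yay, ay and ya hermitian), then x = y. That is, the Moore-Penrose inverse in a Banach algebra is unique when it exists. -/
/-!
For a hermitian idempotent `p` one has `exp (iπ p) = 1 - 2p`, so the reflection `1 - 2p` has
norm one. If `p`, `q` are hermitian idempotents with `pq = q`, `qp = p` (or `pq = p`, `qp = q`),
then `s = p - q` squares to zero and the product of the two reflections is `1 - 2s`; hence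
`‖1 - 2ns‖ = ‖(1 - 2s)^n‖ ≤ 1` for all `n`, which forces `s = 0`. Applied to `ax, ay` and to
`xa, ya` this gives `ax = ay` and `xa = ya`, whence `x = xax = yax = yay = y`.
-/

/-- An element `h` of a complex normed algebra is hermitian if
`‖exp(i t h)‖ = 1` for all real `t`. -/
def IsHermitian {A : Type*} [NormedRing A] [NormedAlgebra ℂ A] (h : A) : Prop :=
  ∀ t : ℝ, ‖NormedSpace.exp (((Complex.I * t) : ℂ) • h)‖ = 1

/-- `x` is a Moore-Penrose inverse of `a`: `a = axa`, `x = xax`, and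
`ax`, `xa` are hermitian. -/
def IsMoorePenrose {A : Type*} [NormedRing A] [NormedAlgebra ℂ A] (a x : A) : Prop :=
  a = a * x * a ∧ x = x * a * x ∧ IsHermitian (a * x) ∧ IsHermitian (x * a)

open NormedSpace
open scoped Nat

theorem eq_zero_of_mul_self_eq_zero_of_norm_one_sub_le_one {R : Type*} [NormedRing R]
    [NormedSpace ℝ R] {s : R} (hs : s * s = 0) (h : ‖1 - s‖ ≤ 1) : s = 0 := by
  have hpow (n : ℕ) : (1 - s) ^ n = 1 - n • s := by
    induction n with
    | zero => simp
    | succ n ih =>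
      rw [pow_succ, ih, sub_mul, one_mul, mul_sub, mul_one, smul_mul_assoc, hs, smul_zero,
        succ_nsmul]
      abel
  have hbound (n : ℕ) : n * ‖s‖ ≤ ‖(1 : R)‖ + 1 := by
    rcases n.eq_zero_or_pos with rfl | hn
    · simp; positivity
    calc n * ‖s‖ = ‖1 - (1 - s) ^ n‖ := by
          rw [hpow, sub_sub_cancel, RCLike.norm_nsmul ℝ, nsmul_eq_mul]
      _ ≤ ‖(1 : R)‖ + ‖1 - s‖ ^ n := (norm_sub_le _ _).trans (by gcongr; exact norm_pow_le' _ hn)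
      _ ≤ ‖(1 : R)‖ + 1 := by gcongr; exact pow_le_one₀ (norm_nonneg _) h
  by_contra hne
  obtain ⟨n, hn⟩ := exists_nat_gt ((‖(1 : R)‖ + 1) / ‖s‖)
  rw [div_lt_iff₀ (norm_pos_iff.2 hne)] at hn
  exact (hbound n).not_gt hn

section

variable {A : Type*} [NormedRing A] [NormedAlgebra ℂ A] {p q : A}

theorem exp_smul_of_isIdempotentElem (hp : IsIdempotentElem p) (z : ℂ) :
    exp (z • p) = 1 - p + Complex.exp z • p := by
  have hsum : HasSum (fun n : ℕ ↦ ((n !⁻¹ : ℂ) * z ^ n) • p) (Complex.exp z • p) := by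
    rw [Complex.exp_eq_exp_ℂ]
    simpa only [smul_eq_mul] using (exp_series_hasSum_exp' (𝕂 := ℂ) z).smul_const p
  refine Eq.trans ?_ ((hsum.update 0 1).tsum_eq.trans (by simp))
  rw [exp_eq_tsum ℂ]
  refine tsum_congr fun n ↦ ?_
  cases n with
  | zero => simp
  | succ n => simp [smul_pow, hp.pow_succ_eq, smul_smul]

theorem IsHermitian.norm_one_sub_two_smul_eq_one (hh : IsHermitian p) (hp : IsIdempotentElem p) :
    ‖1 - (2 : ℂ) • p‖ = 1 := by
  have h := hh Real.pi
  rwa [exp_smul_of_isIdempotentElem hp, mul_comm, Complex.exp_pi_mul_I, neg_one_smul,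
    ← sub_eq_add_neg, sub_sub, ← two_smul ℂ p] at h

theorem IsHermitian.norm_one_sub_two_smul_mul_le_one (hp : IsHermitian p) (hq : IsHermitian q)
    (hp' : IsIdempotentElem p) (hq' : IsIdempotentElem q) :
    ‖(1 - (2 : ℂ) • p) * (1 - (2 : ℂ) • q)‖ ≤ 1 :=
  (norm_mul_le _ _).trans_eq <| by
    rw [hp.norm_one_sub_two_smul_eq_one hp', hq.norm_one_sub_two_smul_eq_one hq', one_mul]

theorem IsHermitian.eq_of_mul_eq_of_mul_eq (hp : IsHermitian p) (hq : IsHermitian q)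
    (hpq : p * q = q) (hqp : q * p = p) : p = q := by
  have hp' : IsIdempotentElem p := by
    rw [IsIdempotentElem]; nth_rw 2 [← hqp]; rw [← mul_assoc, hpq, hqp]
  have hq' : IsIdempotentElem q := by
    rw [IsIdempotentElem]; nth_rw 2 [← hpq]; rw [← mul_assoc, hqp, hpq]
  have hsq : (2 : ℂ) • (p - q) * ((2 : ℂ) • (p - q)) = 0 := by
    simp only [smul_mul_smul_comm, sub_mul, mul_sub, hp'.eq, hq'.eq, hpq, hqp, sub_self,
      smul_zero]
  have hrefl : (1 - (2 : ℂ) • p) * (1 - (2 : ℂ) • q) = 1 - (2 : ℂ) • (p - q) := by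
    simp only [sub_mul, mul_sub, one_mul, mul_one, smul_mul_smul_comm, hpq]
    module
  have := eq_zero_of_mul_self_eq_zero_of_norm_one_sub_le_one hsq
    (hrefl ▸ hp.norm_one_sub_two_smul_mul_le_one hq hp' hq')
  simpa [sub_eq_zero] using this

theorem IsHermitian.eq_of_mul_eq_of_mul_eq' (hp : IsHermitian p) (hq : IsHermitian q)
    (hpq : p * q = p) (hqp : q * p = q) : p = q := by
  have hp' : IsIdempotentElem p := by
    rw [IsIdempotentElem]; nth_rw 1 [← hpq]; rw [mul_assoc, hqp, hpq]
  have hq' : IsIdempotentElem q := by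
    rw [IsIdempotentElem]; nth_rw 1 [← hqp]; rw [mul_assoc, hpq, hqp]
  have hsq : (2 : ℂ) • (p - q) * ((2 : ℂ) • (p - q)) = 0 := by
    simp only [smul_mul_smul_comm, sub_mul, mul_sub, hp'.eq, hq'.eq, hpq, hqp, sub_self,
      smul_zero]
  have hrefl : (1 - (2 : ℂ) • q) * (1 - (2 : ℂ) • p) = 1 - (2 : ℂ) • (p - q) := by
    simp only [sub_mul, mul_sub, one_mul, mul_one, smul_mul_smul_comm, hqp]
    module
  have := eq_zero_of_mul_self_eq_zero_of_norm_one_sub_le_one hsq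
    (hrefl ▸ hq.norm_one_sub_two_smul_mul_le_one hp hq' hp')
  simpa [sub_eq_zero] using this

end

theorem moore_penrose_unique_general {A : Type*} [NormedRing A] [NormedAlgebra ℂ A] (a x y : A)
    (hx : IsMoorePenrose a x) (hy : IsMoorePenrose a y) : x = y := by
  obtain ⟨haxa, hxax, hax, hxa⟩ := hx
  obtain ⟨haya, hyay, hay, hya⟩ := hy
  have hleft : a * x = a * y := hax.eq_of_mul_eq_of_mul_eq hay
    (by rw [← mul_assoc, ← haxa]) (by rw [← mul_assoc, ← haya])
  have hright : x * a = y * a := hxa.eq_of_mul_eq_of_mul_eq' hya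
    (by rw [mul_assoc, ← mul_assoc a, ← haya]) (by rw [mul_assoc, ← mul_assoc a, ← haxa])
  calc x = x * a * x := hxax
    _ = y * (a * x) := by rw [hright, mul_assoc]
    _ = y * a * y := by rw [hleft, mul_assoc]
    _ = y := hyay.symm

/-- The Moore-Penrose inverse in a unital Banach algebra is unique when it exists. -/
theorem moore_penrose_unique {A : Type*} [NormedRing A] [NormedAlgebra ℂ A]
    [CompleteSpace A] [NormOneClass A] (a x y : A)
    (hx : IsMoorePenrose a x) (hy : IsMoorePenrose a y) : x = y :=
  moore_penrose_unique_general a x y hx hy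
end

section
/- Let X be a Banach space and T ∈ L(X). Then T has a Moore-Penrose inverse if and only if there exist hermitian idempotents P, Q ∈ L(X) with N(P) = N(T) and R(Q) = R(T). Moreover such P and Q, when they exist, are unique. -/
theorem eq_zero_of_mul_self_eq_zero_of_norm_one_add_le {A : Type*} [NormedRing A]
    [NormedSpace ℝ A] {h : A} (hh : h * h = 0) (hle : ‖1 + h‖ ≤ 1) : h = 0 := by
  have hpow (n : ℕ) : (1 + h) ^ n = 1 + n • h := by
    induction n with
    | zero => simp
    | succ n ih =>
      simp only [pow_succ, ih, add_mul, mul_add, one_mul, mul_one, smul_mul_assoc, hh, smul_zero,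
        add_zero, succ_nsmul]
      abel
  have hbound (n : ℕ) : n * ‖h‖ ≤ 1 + ‖(1 : A)‖ := by
    rcases n.eq_zero_or_pos with rfl | hn
    · simp only [CharP.cast_eq_zero, zero_mul]; positivity
    calc n * ‖h‖ = ‖(1 + h) ^ n - 1‖ := by
          rw [hpow, add_sub_cancel_left, RCLike.norm_nsmul ℝ, nsmul_eq_mul]
      _ ≤ ‖1 + h‖ ^ n + ‖(1 : A)‖ := (norm_sub_le _ _).trans (by gcongr; exact norm_pow_le' _ hn)
      _ ≤ 1 + ‖(1 : A)‖ := by gcongr; exact pow_le_one₀ (norm_nonneg _) hle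
  by_contra hne
  have hpos : 0 < ‖h‖ := norm_pos_iff.2 hne
  obtain ⟨n, hn⟩ := exists_nat_gt ((1 + ‖(1 : A)‖) / ‖h‖)
  rw [div_lt_iff₀ hpos] at hn
  linarith [hbound n]

theorem IsIdempotentElem.eq_of_mul_eq_left_of_norm_le {A : Type*} [NormedRing A]
    [NormedSpace ℝ A] {p q : A} (hp : IsIdempotentElem p) (hq : IsIdempotentElem q)
    (hp1 : ‖1 - 2 • p‖ ≤ 1) (hq1 : ‖1 - 2 • q‖ ≤ 1) (hpq : p * q = p) (hqp : q * p = q) :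
    p = q := by
  have hsq : (2 • (p - q)) * (2 • (p - q)) = 0 := by
    rw [smul_mul_smul_comm, sub_mul, mul_sub, mul_sub, hp.eq, hq.eq, hpq, hqp]
    simp
  have hprod : (1 - 2 • p) * (1 - 2 • q) = 1 + 2 • (p - q) := by
    simp only [sub_mul, mul_sub, one_mul, mul_one, smul_mul_smul_comm, hpq, smul_sub]
    abel
  have hle : ‖1 + 2 • (p - q)‖ ≤ 1 := by
    rw [← hprod]
    exact (norm_mul_le _ _).trans (mul_le_one₀ hp1 (norm_nonneg _) hq1)
  have h0 := eq_zero_of_mul_self_eq_zero_of_norm_one_add_le hsq hle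
  rw [← Nat.cast_smul_eq_nsmul ℝ, smul_eq_zero] at h0
  exact sub_eq_zero.1 (h0.resolve_left (by norm_num))

theorem IsIdempotentElem.eq_of_mul_eq_right_of_norm_le {A : Type*} [NormedRing A]
    [NormedSpace ℝ A] {p q : A} (hp : IsIdempotentElem p) (hq : IsIdempotentElem q)
    (hp1 : ‖1 - 2 • p‖ ≤ 1) (hq1 : ‖1 - 2 • q‖ ≤ 1) (hpq : p * q = q) (hqp : q * p = p) :
    p = q := by
  have hnorm {r : A} : ‖1 - 2 • (1 - r)‖ = ‖1 - 2 • r‖ := by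
    rw [← norm_neg]; congr 1; simp only [smul_sub]; abel
  have := hp.one_sub.eq_of_mul_eq_left_of_norm_le hq.one_sub (hnorm.trans_le hp1)
    (hnorm.trans_le hq1) (by noncomm_ring; rw [hpq]; abel) (by noncomm_ring; rw [hqp]; abel)
  exact sub_right_injective this

theorem IsIdempotentElem.exp_smul {A : Type*} [NormedRing A] [NormedAlgebra ℂ A]
    [CompleteSpace A] {p : A} (hp : IsIdempotentElem p) (z : ℂ) :
    NormedSpace.exp (z • p) = 1 - p + Complex.exp z • p := by
  have hterm (n : ℕ) : (n.factorial⁻¹ : ℂ) • (z • p) ^ n =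
      (if n = 0 then 1 - p else 0) + ((n.factorial⁻¹ : ℂ) • z ^ n) • p := by
    rcases n with _ | n <;> simp [smul_pow, hp.pow_succ_eq, smul_smul]
  refine (NormedSpace.exp_series_hasSum_exp' (𝕂 := ℂ) (z • p)).unique ?_
  simp_rw [hterm]
  refine (hasSum_ite_eq 0 (1 - p)).add ?_
  rw [Complex.exp_eq_exp_ℂ]
  exact (NormedSpace.exp_series_hasSum_exp' (𝕂 := ℂ) z).smul_const p

theorem IsHermitian.norm_one_sub_two_nsmul {A : Type*} [NormedRing A] [NormedAlgebra ℂ A]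
    [CompleteSpace A] {p : A} (hp : IsIdempotentElem p) (hph : IsHermitian p) :
    ‖1 - 2 • p‖ = 1 := by
  have := hph Real.pi
  rwa [hp.exp_smul, mul_comm, Complex.exp_pi_mul_I, neg_one_smul, ← sub_eq_add_neg, sub_sub,
    ← two_nsmul] at this

theorem isIdempotentElem_mul_of_eq_mul_mul {R : Type*} [Semigroup R] {a x : R}
    (h : a = a * x * a) : IsIdempotentElem (x * a) :=
  calc x * a * (x * a) = x * (a * x * a) := by simp only [mul_assoc]
    _ = x * a := by rw [← h]

theorem isIdempotentElem_mul_of_eq_mul_mul' {R : Type*} [Semigroup R] {a x : R}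
    (h : a = a * x * a) : IsIdempotentElem (a * x) :=
  calc a * x * (a * x) = a * x * a * x := by simp only [mul_assoc]
    _ = a * x := by rw [← h]

namespace ContinuousLinearMap

section Ring

variable {R M : Type*} [Ring R] [TopologicalSpace M] [AddCommGroup M] [Module R M]

theorem mul_eq_left_of_ker_le {T P : M →L[R] M} (hP : IsIdempotentElem P)
    (h : P.ker ≤ T.ker) : T * P = T :=
  coe_injective <|
    (LinearMap.IsIdempotentElem.comp_eq_left_iff (IsIdempotentElem.toLinearMap hP) _).2 h

theorem mul_eq_right_of_range_le {T Q : M →L[R] M} (hQ : IsIdempotentElem Q)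
    (h : T.range ≤ Q.range) : Q * T = T :=
  coe_injective <|
    (LinearMap.IsIdempotentElem.comp_eq_right_iff (IsIdempotentElem.toLinearMap hQ) _).2 h

theorem ker_mul_eq_of_eq_mul_mul {T S : M →L[R] M} (h : T = T * S * T) :
    (S * T).ker = T.ker := by
  refine le_antisymm (fun x hx => ?_) (LinearMap.ker_le_ker_comp _ _)
  change (S * T) x = 0 at hx
  change T x = 0
  calc T x = T ((S * T) x) := congr($h x)
    _ = 0 := by rw [hx, map_zero]

theorem range_mul_eq_of_eq_mul_mul {T S : M →L[R] M} (h : T = T * S * T) :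
    (T * S).range = T.range := by
  refine le_antisymm (LinearMap.range_comp_le_range _ _) ?_
  rintro _ ⟨x, rfl⟩
  exact ⟨T x, congr($h x).symm⟩

end Ring

section Banach

variable {𝕜 X : Type*} [NontriviallyNormedField 𝕜] [NormedAddCommGroup X] [NormedSpace 𝕜 X]
  [CompleteSpace X]

theorem exists_mul_eq_of_ker_eq_of_range_eq {T P Q : X →L[𝕜] X} (hP : IsIdempotentElem P)
    (hQ : IsIdempotentElem Q) (hker : P.ker = T.ker) (hrange : Q.range = T.range) :
    ∃ S : X →L[𝕜] X, S * T = P ∧ T * S = Q ∧ S * Q = S := by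
  have hTP : T * P = T := mul_eq_left_of_ker_le hP hker.le
  have hQT : Q * T = T := mul_eq_right_of_range_le hQ hrange.ge
  have : CompleteSpace P.range := (IsIdempotentElem.isClosed_range hP).completeSpace_coe
  have : CompleteSpace Q.range := (IsIdempotentElem.isClosed_range hQ).completeSpace_coe
  let T₀ : P.range →L[𝕜] Q.range := T.restrict fun x _ => hrange ▸ LinearMap.mem_range_self _ x
  have hinj : T₀.ker = ⊥ := by
    refine (Submodule.eq_bot_iff _).2 fun u hu => Subtype.ext ?_
    have hPu : P u = u :=
      (LinearMap.IsIdempotentElem.mem_range_iff (IsIdempotentElem.toLinearMap hP)).1 u.2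
    have hu : (u : X) ∈ P.ker := hker ▸ congrArg Subtype.val hu
    rw [← hPu]
    exact hu
  have hsurj : T₀.range = ⊤ := by
    refine eq_top_iff.2 fun v _ => ?_
    obtain ⟨x, hx⟩ : (v : X) ∈ T.range := hrange ▸ v.2
    exact ⟨⟨P x, LinearMap.mem_range_self _ x⟩, Subtype.ext (congr($hTP x).trans hx)⟩
  let e := ContinuousLinearEquiv.ofBijective T₀ hinj hsurj
  refine ⟨P.range.subtypeL ∘L e.symm ∘L Q.codRestrict _ (LinearMap.mem_range_self _), ?_, ?_, ?_⟩
  · ext x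
    exact congrArg Subtype.val
      ((e.symm_apply_eq (y := ⟨P x, LinearMap.mem_range_self _ x⟩)).2
        (Subtype.ext (congr($hQT x).trans congr($hTP x).symm)))
  · ext x
    exact congrArg Subtype.val (e.apply_symm_apply _)
  · ext x
    exact congrArg (Subtype.val ∘ e.symm) (Subtype.ext congr($hQ x))

end Banach

end ContinuousLinearMap

section HermitianIdempotent

variable {X : Type*} [NormedAddCommGroup X] [NormedSpace ℂ X] [CompleteSpace X]
  {P P' : X →L[ℂ] X}

theorem IsHermitian.eq_of_ker_eq (hP : IsIdempotentElem P) (hP' : IsIdempotentElem P')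
    (hPh : IsHermitian P) (hP'h : IsHermitian P') (h : P.ker = P'.ker) : P = P' :=
  hP.eq_of_mul_eq_left_of_norm_le hP' (hPh.norm_one_sub_two_nsmul hP).le
    (hP'h.norm_one_sub_two_nsmul hP').le (ContinuousLinearMap.mul_eq_left_of_ker_le hP' h.ge)
    (ContinuousLinearMap.mul_eq_left_of_ker_le hP h.le)

theorem IsHermitian.eq_of_range_eq (hP : IsIdempotentElem P) (hP' : IsIdempotentElem P')
    (hPh : IsHermitian P) (hP'h : IsHermitian P') (h : P.range = P'.range) : P = P' :=
  hP.eq_of_mul_eq_right_of_norm_le hP' (hPh.norm_one_sub_two_nsmul hP).le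
    (hP'h.norm_one_sub_two_nsmul hP').le (ContinuousLinearMap.mul_eq_right_of_range_le hP h.ge)
    (ContinuousLinearMap.mul_eq_right_of_range_le hP' h.le)

end HermitianIdempotent

/-- `T` has a Moore-Penrose inverse iff there exist hermitian idempotents `P`, `Q`
with `N(P) = N(T)` and `R(Q) = R(T)`; such `P` and `Q` are unique. -/
theorem moore_penrose_exists_iff_hermitian_idempotents {X : Type*} [NormedAddCommGroup X]
    [NormedSpace ℂ X] [CompleteSpace X] (T : X →L[ℂ] X) :
    ((∃ S : X →L[ℂ] X, IsMoorePenrose T S) ↔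
      ∃ P Q : X →L[ℂ] X, IsIdempotentElem P ∧ IsHermitian P ∧ IsIdempotentElem Q ∧
        IsHermitian Q ∧ LinearMap.ker (P : X →ₗ[ℂ] X) = LinearMap.ker (T : X →ₗ[ℂ] X) ∧
        LinearMap.range (Q : X →ₗ[ℂ] X) = LinearMap.range (T : X →ₗ[ℂ] X)) ∧
    ∀ P P' Q Q' : X →L[ℂ] X,
      (IsIdempotentElem P ∧ IsHermitian P ∧ LinearMap.ker (P : X →ₗ[ℂ] X) = LinearMap.ker (T : X →ₗ[ℂ] X)) →
      (IsIdempotentElem P' ∧ IsHermitian P' ∧ LinearMap.ker (P' : X →ₗ[ℂ] X) = LinearMap.ker (T : X →ₗ[ℂ] X)) →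
      (IsIdempotentElem Q ∧ IsHermitian Q ∧ LinearMap.range (Q : X →ₗ[ℂ] X) = LinearMap.range (T : X →ₗ[ℂ] X)) →
      (IsIdempotentElem Q' ∧ IsHermitian Q' ∧ LinearMap.range (Q' : X →ₗ[ℂ] X) = LinearMap.range (T : X →ₗ[ℂ] X)) →
      P = P' ∧ Q = Q' := by
  refine ⟨⟨fun ⟨S, hTST, _, hTS, hST⟩ => ?_, fun ⟨P, Q, hP, hPh, hQ, hQh, hker, hrange⟩ => ?_⟩, ?_⟩
  · exact ⟨S * T, T * S, isIdempotentElem_mul_of_eq_mul_mul hTST, hST,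
      isIdempotentElem_mul_of_eq_mul_mul' hTST, hTS,
      ContinuousLinearMap.ker_mul_eq_of_eq_mul_mul hTST,
      ContinuousLinearMap.range_mul_eq_of_eq_mul_mul hTST⟩
  · obtain ⟨S, hST, hTS, hSQ⟩ :=
      ContinuousLinearMap.exists_mul_eq_of_ker_eq_of_range_eq hP hQ hker hrange
    refine ⟨S, ?_, ?_, hTS ▸ hQh, hST ▸ hPh⟩
    · rw [hTS, ContinuousLinearMap.mul_eq_right_of_range_le hQ hrange.ge]
    · rw [mul_assoc, hTS, hSQ]
  · rintro P P' Q Q' ⟨hP, hPh, hPT⟩ ⟨hP', hP'h, hP'T⟩ ⟨hQ, hQh, hQT⟩ ⟨hQ', hQ'h, hQ'T⟩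
    exact ⟨hPh.eq_of_ker_eq hP hP' hP'h (hPT.trans hP'T.symm),
      hQh.eq_of_range_eq hQ hQ' hQ'h (hQT.trans hQ'T.symm)⟩
end

section
/- Let A be a unital Banach algebra, J a proper closed two-sided ideal of A, and a ∈ A with Moore-Penrose inverse a†. Then in the quotient Banach algebra A/J, the class of a† is the Moore-Penrose inverse of the class of a: (ã)† = (a†)~. -/
theorem norm_le_of_norm_eq_sInf {α β : Type*} [SeminormedAddGroup α] [Norm β] (f : α → β)
    (hf : ∀ b : β, ‖b‖ = sInf {r : ℝ | ∃ x : α, f x = b ∧ ‖x‖ = r}) (x : α) :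
    ‖f x‖ ≤ ‖x‖ := by
  rw [hf]
  exact csInf_le ⟨0, fun r ⟨y, _, hy⟩ => hy ▸ norm_nonneg y⟩ ⟨x, rfl, rfl⟩

theorem norm_eq_one_of_mul_eq_one {R : Type*} [NormedRing R] [NormOneClass R] {u v : R}
    (huv : u * v = 1) (hu : ‖u‖ ≤ 1) (hv : ‖v‖ ≤ 1) : ‖u‖ = 1 := by
  have : 1 ≤ ‖u‖ * ‖v‖ := by simpa [huv] using norm_mul_le u v
  nlinarith [norm_nonneg u, norm_nonneg v]

theorem NormedSpace.exp_mul_exp_neg {A : Type*} [NormedRing A] [NormedAlgebra ℚ A]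
    [CompleteSpace A] (x : A) : exp x * exp (-x) = 1 := by
  rw [← exp_add_of_commute (Commute.refl x).neg_right, add_neg_cancel, exp_zero]

section Contractive

variable {A B : Type*} [NormedRing A] [NormedAlgebra ℂ A] [CompleteSpace A]
  [NormedRing B] [NormedAlgebra ℂ B] [NormOneClass B]
  (π : A →ₐ[ℂ] B)

theorem IsHermitian.map (hπ : ∀ y : A, ‖π y‖ ≤ ‖y‖) {h : A} (hh : IsHermitian h) :
    IsHermitian (π h) := by
  -- the `exp` API is stated for `ℚ`-algebras, which `ℂ`-algebras are not by instance
  let _ : NormedAlgebra ℚ A := NormedAlgebra.restrictScalars ℚ ℂ A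
  let _ : Algebra ℚ B := Algebra.restrictScalars ℚ ℂ B
  have hcont : Continuous π := AddMonoidHomClass.continuous_of_bound π 1 (by simpa using hπ)
  have map_exp (t : ℝ) : π (NormedSpace.exp (((Complex.I * t) : ℂ) • h)) =
      NormedSpace.exp (((Complex.I * t) : ℂ) • π h) := by
    rw [NormedSpace.map_exp π hcont, map_smul]
  have norm_le (t : ℝ) : ‖NormedSpace.exp (((Complex.I * t) : ℂ) • π h)‖ ≤ 1 :=
    map_exp t ▸ (hπ _).trans (hh t).le
  intro t
  refine norm_eq_one_of_mul_eq_one (v := NormedSpace.exp (((Complex.I * (-t : ℝ)) : ℂ) • π h))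
    ?_ (norm_le t) (norm_le (-t))
  rw [← map_exp, ← map_exp, ← map_mul, Complex.ofReal_neg, mul_neg, neg_smul,
    NormedSpace.exp_mul_exp_neg, map_one]

theorem IsMoorePenrose.map (hπ : ∀ y : A, ‖π y‖ ≤ ‖y‖) {a x : A} (h : IsMoorePenrose a x) :
    IsMoorePenrose (π a) (π x) := by
  obtain ⟨haxa, hxax, hax, hxa⟩ := h
  refine ⟨?_, ?_, ?_, ?_⟩
  · rw [← map_mul, ← map_mul, ← haxa]
  · rw [← map_mul, ← map_mul, ← hxax]
  · rw [← map_mul]; exact hax.map π hπ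
  · rw [← map_mul]; exact hxa.map π hπ

end Contractive

/-- The quotient `A/J` is modelled by `π : A → B`, where `B` carries the quotient norm `hnorm`. -/
theorem moore_penrose_quotient_general {A B : Type*} [NormedRing A] [NormedAlgebra ℂ A]
    [CompleteSpace A] [NormedRing B] [NormedAlgebra ℂ B]
    [NormOneClass B] (π : A →ₐ[ℂ] B)
    (hnorm : ∀ b : B, ‖b‖ = sInf {r : ℝ | ∃ x : A, π x = b ∧ ‖x‖ = r})
    (a x : A) (h : IsMoorePenrose a x) : IsMoorePenrose (π a) (π x) :=
  h.map π (norm_le_of_norm_eq_sInf π hnorm)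

/-- Quotient by a proper closed two-sided ideal, phrased via a surjective algebra
homomorphism `π : A → A/J` onto a unital Banach algebra carrying the quotient norm:
the Moore-Penrose inverse passes to the quotient, `(ã)† = (a†)~`. -/
theorem moore_penrose_quotient {A B : Type*} [NormedRing A] [NormedAlgebra ℂ A]
    [CompleteSpace A] [NormOneClass A] [NormedRing B] [NormedAlgebra ℂ B]
    [CompleteSpace B] [NormOneClass B] (π : A →ₐ[ℂ] B)
    (hsurj : Function.Surjective π)
    (hnorm : ∀ b : B, ‖b‖ = sInf {r : ℝ | ∃ x : A, π x = b ∧ ‖x‖ = r})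
    (a x : A) (h : IsMoorePenrose a x) : IsMoorePenrose (π a) (π x) :=
  moore_penrose_quotient_general π hnorm a x h
end

section
/- Let X be a Banach space and T ∈ L(X) with Moore-Penrose inverse T†. Then the adjoint T* ∈ L(X*) has a Moore-Penrose inverse and (T*)† = (T†)*. -/
/-- The Banach space adjoint (transpose) of `T`, acting on the dual space. -/
noncomputable def banachAdjoint {X : Type*} [NormedAddCommGroup X] [NormedSpace ℂ X]
    (T : X →L[ℂ] X) : StrongDual ℂ X →L[ℂ] StrongDual ℂ X :=
  (ContinuousLinearMap.compL ℂ X X ℂ).flip T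

/-!
The Banach adjoint `T ↦ T*` is a linear isometric anti-homomorphism `L(X) → L(X*)`, i.e. an
isometric algebra homomorphism into the opposite algebra `L(X*)ᵐᵒᵖ`. Continuous algebra
homomorphisms commute with `exp`, so isometric ones preserve hermitian elements and hence
Moore-Penrose pairs. Passing back from the opposite algebra only swaps the roles of `ax` and
`xa`, which the definition of a Moore-Penrose inverse treats symmetrically.
-/

open NormedSpace MulOpposite

section

variable {A B : Type*} [NormedRing A] [NormedAlgebra ℂ A] [NormedRing B] [NormedAlgebra ℂ B]

theorem isHermitian_op_iff {b : B} : IsHermitian (op b) ↔ IsHermitian b := by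
  simp only [IsHermitian, ← op_smul, exp_op, norm_op]

theorem IsHermitian.map_s12 [CompleteSpace A] (f : A →ₐ[ℂ] B) (hf : ∀ a, ‖f a‖ = ‖a‖) {u : A}
    (hu : IsHermitian u) : IsHermitian (f u) := by
  have hcont : Continuous f := (AddMonoidHomClass.isometry_of_norm f hf).continuous
  intro t
  rw [← map_smul, ← map_exp_of_mem_ball (𝕂 := ℂ) f hcont _ (by simp [expSeries_radius_eq_top]),
    hf]
  exact hu t

theorem isMoorePenrose_op_iff {a x : B} : IsMoorePenrose (op a) (op x) ↔ IsMoorePenrose a x := by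
  simp only [IsMoorePenrose, ← op_mul, op_inj, isHermitian_op_iff, ← mul_assoc]
  tauto

theorem IsMoorePenrose.map_s12 [CompleteSpace A] (f : A →ₐ[ℂ] B) (hf : ∀ a, ‖f a‖ = ‖a‖) {a x : A}
    (h : IsMoorePenrose a x) : IsMoorePenrose (f a) (f x) := by
  obtain ⟨haxa, hxax, hax, hxa⟩ := h
  refine ⟨?_, ?_, ?_, ?_⟩
  · simpa only [map_mul] using congrArg f haxa
  · simpa only [map_mul] using congrArg f hxax
  · simpa only [map_mul] using hax.map_s12 f hf
  · simpa only [map_mul] using hxa.map_s12 f hf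

end

section

variable {X : Type*} [NormedAddCommGroup X] [NormedSpace ℂ X]

theorem norm_banachAdjoint (T : X →L[ℂ] X) : ‖banachAdjoint T‖ = ‖T‖ := by
  refine le_antisymm ?_ ?_
  · refine ContinuousLinearMap.opNorm_le_bound _ (norm_nonneg T) fun f => ?_
    rw [mul_comm]
    exact f.opNorm_comp_le T
  · refine ContinuousLinearMap.opNorm_le_bound _ (norm_nonneg (banachAdjoint T)) fun x => ?_
    refine norm_le_dual_bound ℂ (T x) (by positivity) fun f => ?_
    calc ‖f (T x)‖ = ‖banachAdjoint T f x‖ := rfl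
      _ ≤ ‖banachAdjoint T f‖ * ‖x‖ := (banachAdjoint T f).le_opNorm x
      _ ≤ ‖banachAdjoint T‖ * ‖x‖ * ‖f‖ := by
        rw [mul_right_comm]; gcongr; exact (banachAdjoint T).le_opNorm f

noncomputable def banachAdjointAlgHom :
    (X →L[ℂ] X) →ₐ[ℂ] (StrongDual ℂ X →L[ℂ] StrongDual ℂ X)ᵐᵒᵖ :=
  AlgHom.ofLinearMap
    ((opLinearEquiv ℂ).toLinearMap ∘ₗ (ContinuousLinearMap.compL ℂ X X ℂ).flip.toLinearMap)
    rfl fun _ _ => rfl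

end

/-- If `T` has Moore-Penrose inverse `S`, then `T*` has a Moore-Penrose inverse
and `(T*)† = (T†)*`. -/
theorem moore_penrose_adjoint {X : Type*} [NormedAddCommGroup X] [NormedSpace ℂ X]
    [CompleteSpace X] (T S : X →L[ℂ] X) (h : IsMoorePenrose T S) :
    IsMoorePenrose (banachAdjoint T) (banachAdjoint S) := by
  have hop := h.map_s12 (B := (StrongDual ℂ X →L[ℂ] StrongDual ℂ X)ᵐᵒᵖ) banachAdjointAlgHom
    norm_banachAdjoint
  exact isMoorePenrose_op_iff.mp hop
end

section
/- Let A be a unital Banach algebra and a ∈ A an EP element (a† exists and aa† = a†a). Then for every k ≥ 1, a^k has a Moore-Penrose inverse, (a^k)† = (a†)^k, and a^k is EP. -/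
/-! Since `a` and `x` commute and `a * x` is idempotent, `a ^ k * x ^ k = (a * x) ^ k = a * x`
(and likewise `x ^ k * a ^ k = x * a`), so the four Penrose conditions for `a ^ k`, `x ^ k`
reduce to those for `a`, `x`. -/

section Monoid

variable {M : Type*} [Monoid M] {a x : M}

theorem isIdempotentElem_mul_of_mul_mul_eq_self (h : a * x * a = a) : IsIdempotentElem (a * x) := by
  rw [IsIdempotentElem, ← mul_assoc, h]

theorem Commute.pow_mul_pow_eq_mul (hc : Commute a x) (h : a * x * a = a) {k : ℕ} (hk : k ≠ 0) :
    a ^ k * x ^ k = a * x := by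
  rw [← hc.mul_pow, (isIdempotentElem_mul_of_mul_mul_eq_self h).pow_eq hk]

theorem Commute.pow_mul_pow_mul_pow (hc : Commute a x) (h : a * x * a = a) {k : ℕ} (hk : k ≠ 0) :
    a ^ k * x ^ k * a ^ k = a ^ k := by
  obtain ⟨n, rfl⟩ := Nat.exists_eq_succ_of_ne_zero hk
  rw [hc.pow_mul_pow_eq_mul h hk, pow_succ', ← mul_assoc, h]

end Monoid

theorem IsMoorePenrose.pow {A : Type*} [NormedRing A] [NormedAlgebra ℂ A] {a x : A}
    (hx : IsMoorePenrose a x) (hc : Commute a x) {k : ℕ} (hk : k ≠ 0) :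
    IsMoorePenrose (a ^ k) (x ^ k) := by
  obtain ⟨hax, hxa, hax_herm, hxa_herm⟩ := hx
  refine ⟨(hc.pow_mul_pow_mul_pow hax.symm hk).symm, (hc.symm.pow_mul_pow_mul_pow hxa.symm hk).symm,
    ?_, ?_⟩
  · rwa [hc.pow_mul_pow_eq_mul hax.symm hk]
  · rwa [hc.symm.pow_mul_pow_eq_mul hxa.symm hk]

theorem pow_EP_general {A : Type*} [NormedRing A] [NormedAlgebra ℂ A]
    (a x : A) (hx : IsMoorePenrose a x) (hEP : a * x = x * a) :
    ∀ k : ℕ, 1 ≤ k → IsMoorePenrose (a ^ k) (x ^ k) ∧ a ^ k * x ^ k = x ^ k * a ^ k := by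
  intro k hk
  have hc : Commute a x := hEP
  have hk0 : k ≠ 0 := Nat.one_le_iff_ne_zero.mp hk
  refine ⟨hx.pow hc hk0, ?_⟩
  rw [hc.pow_mul_pow_eq_mul hx.1.symm hk0, hc.symm.pow_mul_pow_eq_mul hx.2.1.symm hk0, hEP]

/-- If `a` is EP, then for every `k ≥ 1`, `a^k` has Moore-Penrose inverse `(a†)^k`
and `a^k` is EP. -/
theorem pow_EP {A : Type*} [NormedRing A] [NormedAlgebra ℂ A] [CompleteSpace A]
    [NormOneClass A] (a x : A) (hx : IsMoorePenrose a x) (hEP : a * x = x * a) :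
    ∀ k : ℕ, 1 ≤ k → IsMoorePenrose (a ^ k) (x ^ k) ∧ a ^ k * x ^ k = x ^ k * a ^ k :=
  pow_EP_general a x hx hEP
end

section
/- Let A be a unital Banach algebra and a ∈ A with Moore-Penrose inverse a†. Then a is EP if and only if a² a† = a = a† a². -/
/-! If `a` and `x` commute, then `a² x = a (x a) = a x a = a`, and likewise `x a² = a`.
Conversely, when `a² x = a = x a²`, both `x a` and `a x` equal `x a² x`. -/

section Monoid

variable {M : Type*} [Monoid M] {a x : M}

theorem mul_comm_of_sq_mul_eq_of_mul_sq_eq (h₁ : a ^ 2 * x = a) (h₂ : x * a ^ 2 = a) :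
    a * x = x * a :=
  calc a * x = x * a ^ 2 * x := by rw [h₂]
    _ = x * (a ^ 2 * x) := mul_assoc x _ x
    _ = x * a := by rw [h₁]

theorem sq_mul_eq_and_mul_sq_eq_of_mul_comm (ha : a * x * a = a) (hc : a * x = x * a) :
    a ^ 2 * x = a ∧ x * a ^ 2 = a := by
  constructor
  · calc a ^ 2 * x = a * (x * a) := by rw [← hc, sq, mul_assoc]
      _ = a := by rw [← mul_assoc, ha]
  · calc x * a ^ 2 = a * x * a := by rw [hc, sq, mul_assoc]
      _ = a := ha

end Monoid

theorem EP_iff_sq_mul_general {A : Type*} [NormedRing A] [NormedAlgebra ℂ A] (a x : A)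
    (hx : IsMoorePenrose a x) :
    a * x = x * a ↔ (a ^ 2 * x = a ∧ x * a ^ 2 = a) :=
  ⟨sq_mul_eq_and_mul_sq_eq_of_mul_comm hx.1.symm,
    fun h ↦ mul_comm_of_sq_mul_eq_of_mul_sq_eq h.1 h.2⟩

/-- `a` is EP iff `a² a† = a = a† a²`. -/
theorem EP_iff_sq_mul {A : Type*} [NormedRing A] [NormedAlgebra ℂ A] [CompleteSpace A]
    [NormOneClass A] (a x : A) (hx : IsMoorePenrose a x) :
    a * x = x * a ↔ (a ^ 2 * x = a ∧ x * a ^ 2 = a) :=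
  EP_iff_sq_mul_general a x hx
end

section
/- Let A be a unital Banach algebra and a ∈ A with Moore-Penrose inverse a†. Then a is EP if and only if a ∈ a† A ∩ A a†, which holds if and only if a† ∈ a A ∩ A a. -/
section Semigroup

variable {M : Type*} [Semigroup M] {a x : M}

theorem mul_mul_self_eq_of_eq_mul (hx : x = x * a * x) {u : M} (hu : a = x * u) :
    x * a * a = a := by
  nth_rewrite 2 [hu]
  rw [← mul_assoc, ← hx, ← hu]

theorem mul_self_mul_eq_of_eq_mul (hx : x = x * a * x) {v : M} (hv : a = v * x) :
    a * a * x = a := by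
  nth_rewrite 1 [hv]
  rw [mul_assoc, mul_assoc, ← mul_assoc x, ← hx, ← hv]

theorem mul_comm_of_mul_mul_self_eq (hl : x * a * a = a) (hr : a * a * x = a) :
    a * x = x * a :=
  calc a * x = x * a * a * x := by rw [hl]
    _ = x * (a * a * x) := by simp only [mul_assoc]
    _ = x * a := by rw [hr]

theorem mul_comm_iff_exists_eq_mul (ha : a = a * x * a) (hx : x = x * a * x) :
    a * x = x * a ↔ (∃ u, a = x * u) ∧ ∃ v, a = v * x := by
  constructor
  · intro hcomm
    refine ⟨⟨a * a, ?_⟩, ⟨a * a, ?_⟩⟩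
    · rw [← mul_assoc, ← hcomm, ← ha]
    · rw [mul_assoc, hcomm, ← mul_assoc, ← ha]
  · rintro ⟨⟨u, hu⟩, ⟨v, hv⟩⟩
    exact mul_comm_of_mul_mul_self_eq (mul_mul_self_eq_of_eq_mul hx hu)
      (mul_self_mul_eq_of_eq_mul hx hv)

end Semigroup

theorem EP_iff_mem_ideals_general {A : Type*} [NormedRing A] [NormedAlgebra ℂ A]
    (a x : A) (hx : IsMoorePenrose a x) :
    (a * x = x * a ↔ ((∃ u : A, a = x * u) ∧ (∃ v : A, a = v * x))) ∧
    (a * x = x * a ↔ ((∃ u : A, x = a * u) ∧ (∃ v : A, x = v * a))) := by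
  obtain ⟨ha, hx, -, -⟩ := hx
  exact ⟨mul_comm_iff_exists_eq_mul ha hx, eq_comm.trans (mul_comm_iff_exists_eq_mul hx ha)⟩

/-- `a` is EP iff `a ∈ a†A ∩ Aa†`, iff `a† ∈ aA ∩ Aa`. -/
theorem EP_iff_mem_ideals {A : Type*} [NormedRing A] [NormedAlgebra ℂ A] [CompleteSpace A]
    [NormOneClass A] (a x : A) (hx : IsMoorePenrose a x) :
    (a * x = x * a ↔ ((∃ u : A, a = x * u) ∧ (∃ v : A, a = v * x))) ∧
    (a * x = x * a ↔ ((∃ u : A, x = a * u) ∧ (∃ v : A, x = v * a))) :=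
  EP_iff_mem_ideals_general a x hx
end
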